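/- arXiv:1912.04407 — 2 statements merged into one kernel-verified Lean document; each statement's English description precedes it below -/
import Mathlib

section
/- Let N ≥ 1 and let r = (r_0,...,r_{N-1}) and s = (s_0,...,s_{N-1}) be tuples of positive integers. An N-tuple of Young diagrams Y = (Y_1,...,Y_N) satisfies the Burge conditions with data (r,s) if Y_{I,i} ≥ Y_{I+1,i+r_I−1} − s_I + 1 for all i ≥ 1 and 0 ≤ I < N (indices of diagrams taken cyclically, Y_0 = Y_N, where Y_{I,i} denotes the length of row i of Y_I). Then Y satisfies the Burge conditions with data (r,s) if and only if the tuple of conjugate (transposed) Young diagrams (Y_1^T,...,Y_N^T) satisfies the Burge conditions with data (s,r). -/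
/-- A Young diagram, identified with its weakly decreasing sequence of row lengths
(indexed from 0), eventually zero. -/
def IsYD (f : ℕ → ℕ) : Prop := Antitone f ∧ ∃ n, f n = 0

/-- The conjugate (transposed) Young diagram: `(fᵀ)_j = #{i : f_i ≥ j+1}`
(0-indexed columns). -/
noncomputable def conjYD (f : ℕ → ℕ) : ℕ → ℕ := fun j => {i : ℕ | j + 1 ≤ f i}.ncard

/-- The cyclic predecessor on `Fin N`. -/
def cyclePred {N : ℕ} (I : Fin N) : Fin N := ⟨(I.val + N - 1) % N, Nat.mod_lt _ I.pos⟩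

/-- The Burge conditions with data `(r, s)` for an `N`-tuple of Young diagrams
`Y_1, …, Y_N` (here `D I = Y_{I+1}` for `I : Fin N`, rows 0-indexed):
`Y_{I,i} ≥ Y_{I+1, i+r_I−1} − s_I + 1` for all rows `i ≥ 1` and all `0 ≤ I < N`,
cyclically with `Y_0 = Y_N`. -/
def BurgeCond (N : ℕ) (r s : Fin N → ℕ) (D : Fin N → ℕ → ℕ) : Prop :=
  ∀ I : Fin N, ∀ i : ℕ, D I (i + (r I - 1)) + 1 ≤ D (cyclePred I) i + s I

/-- Galois duality between a Young diagram and its conjugate. -/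
lemma conj_dual {f : ℕ → ℕ} (hf : IsYD f) (i j : ℕ) :
    j + 1 ≤ f i ↔ i + 1 ≤ conjYD f j := by
  obtain ⟨hmono, n, hn⟩ := hf
  have hfin : {i : ℕ | j + 1 ≤ f i}.Finite := by
    apply (Set.finite_Iio n).subset
    intro m hm
    by_contra hlt
    have : f m ≤ f n := hmono (le_of_not_gt hlt)
    simp only [Set.mem_setOf_eq] at hm
    omega
  constructor
  · intro h
    have hsub : Set.Iic i ⊆ {i : ℕ | j + 1 ≤ f i} := by
      intro m hm
      exact le_trans h (hmono hm)
    have := Set.ncard_le_ncard hsub hfin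
    have hIic : (Set.Iic i).ncard = i + 1 := by
      rw [show (Set.Iic i) = ↑(Finset.Iic i) by simp, Set.ncard_coe_finset]
      simp
    unfold conjYD
    omega
  · intro h
    by_contra hc
    have hsub : {i : ℕ | j + 1 ≤ f i} ⊆ Set.Iio i := by
      intro m hm
      simp only [Set.mem_setOf_eq] at hm
      by_contra hlt
      have : f m ≤ f i := hmono (le_of_not_gt hlt)
      omega
    have := Set.ncard_le_ncard hsub (Set.finite_Iio i)
    have hIio : (Set.Iio i).ncard = i := by
      rw [show (Set.Iio i) = ↑(Finset.Iio i) by simp, Set.ncard_coe_finset]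
      simp
    unfold conjYD at h
    omega

/-- The one-index Burge inequality is equivalent to its conjugate form. -/
lemma key {f g : ℕ → ℕ} (hf : IsYD f) (hg : IsYD g) {r s : ℕ}
    (hr : 1 ≤ r) (hs : 1 ≤ s) :
    (∀ i, f (i + (r - 1)) + 1 ≤ g i + s) ↔
      (∀ i, conjYD f (i + (s - 1)) + 1 ≤ conjYD g i + r) := by
  have hL : (∀ i, f (i + (r - 1)) + 1 ≤ g i + s) ↔
      ¬ ∃ i j, g i ≤ j ∧ j + s ≤ f (i + (r - 1)) := by
    constructor
    · rintro h ⟨i, j, h1, h2⟩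
      have := h i
      omega
    · intro h i
      by_contra hc
      exact h ⟨i, g i, le_refl _, by omega⟩
  have hR : (∀ i, conjYD f (i + (s - 1)) + 1 ≤ conjYD g i + r) ↔
      ¬ ∃ i j, conjYD g i ≤ j ∧ j + r ≤ conjYD f (i + (s - 1)) := by
    constructor
    · rintro h ⟨i, j, h1, h2⟩
      have := h i
      omega
    · intro h i
      by_contra hc
      exact h ⟨i, conjYD g i, le_refl _, by omega⟩
  rw [hL, hR]
  apply not_congr
  constructor
  · rintro ⟨i, j, h1, h2⟩
    refine ⟨j, i, ?_, ?_⟩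
    · have := (conj_dual hg i j).mpr
      omega
    · have := (conj_dual hf (i + (r - 1)) (j + (s - 1))).mp (by omega)
      omega
  · rintro ⟨i, j, h1, h2⟩
    refine ⟨j, i, ?_, ?_⟩
    · have := (conj_dual hg j i).mp
      omega
    · have := (conj_dual hf (j + (r - 1)) (i + (s - 1))).mpr (by omega)
      omega

/-- Burge duality: an `N`-tuple of Young diagrams satisfies the Burge conditions with
data `(r, s)` if and only if the tuple of conjugate diagrams satisfies them with data
`(s, r)`. -/
theorem burge_conjugate_duality (N : ℕ) (hN : 1 ≤ N)
    (r s : Fin N → ℕ) (hr : ∀ I, 1 ≤ r I) (hs : ∀ I, 1 ≤ s I)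
    (D : Fin N → ℕ → ℕ) (hD : ∀ I, IsYD (D I)) :
    BurgeCond N r s D ↔ BurgeCond N s r (fun I => conjYD (D I)) := by
  unfold BurgeCond
  exact forall_congr' fun I => key (hD I) (hD (cyclePred I)) (hr I) (hs I)
end

section
/- Relation between principal characters of sl(2)^ level 3 and sl(3)^ level 2: Pr χ^{sl(2)^}_{[3,0]}(q²)/(q²;q²)_∞ = Pr χ^{sl(3)^}_{[2,0,0]}(q³)/(q³;q³)_∞ and Pr χ^{sl(2)^}_{[2,1]}(q²)/(q²;q²)_∞ = Pr χ^{sl(3)^}_{[1,1,0]}(q³)/(q³;q³)_∞, where the principal characters have the product forms Pr χ^{sl(2)^}_{[3,0]}(q) = (−q^{1/2}; q^{1/2})_∞ / ((q; q^{5/2})_∞ (q^{3/2}; q^{5/2})_∞), Pr χ^{sl(2)^}_{[2,1]}(q) = (−q^{1/2}; q^{1/2})_∞ / ((q^{1/2}; q^{5/2})_∞ (q²; q^{5/2})_∞), Pr χ^{sl(3)^}_{[2,0,0]}(q) = (q;q)_∞ / ((q^{1/3}; q^{1/3})_∞ (q^{2/3}; q^{5/3})_∞ (q; q^{5/3})_∞),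 and Pr χ^{sl(3)^}_{[1,1,0]}(q) = (q;q)_∞ / ((q^{1/3}; q^{1/3})_∞ (q^{1/3}; q^{5/3})_∞ (q^{4/3}; q^{5/3})_∞). -/
/-- The infinite q-Pochhammer symbol `(a; q)_∞ = ∏_{n ≥ 0} (1 − a qⁿ)`. -/
noncomputable def qPochInf (a q : ℝ) : ℝ := ∏' k : ℕ, (1 - a * q ^ k)

/-- `Pr χ^{sl(2)^}_{[3,0]}(x) = (−x^{1/2}; x^{1/2})_∞ / ((x; x^{5/2})_∞ (x^{3/2}; x^{5/2})_∞)`. -/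
noncomputable def prChi2_30 (x : ℝ) : ℝ :=
  qPochInf (-(x ^ ((1 : ℝ) / 2))) (x ^ ((1 : ℝ) / 2)) /
    (qPochInf x (x ^ ((5 : ℝ) / 2)) * qPochInf (x ^ ((3 : ℝ) / 2)) (x ^ ((5 : ℝ) / 2)))

/-- `Pr χ^{sl(2)^}_{[2,1]}(x) = (−x^{1/2}; x^{1/2})_∞ / ((x^{1/2}; x^{5/2})_∞ (x²; x^{5/2})_∞)`. -/
noncomputable def prChi2_21 (x : ℝ) : ℝ :=
  qPochInf (-(x ^ ((1 : ℝ) / 2))) (x ^ ((1 : ℝ) / 2)) /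
    (qPochInf (x ^ ((1 : ℝ) / 2)) (x ^ ((5 : ℝ) / 2)) *
      qPochInf (x ^ 2) (x ^ ((5 : ℝ) / 2)))

/-- `Pr χ^{sl(3)^}_{[2,0,0]}(x) = (x;x)_∞ / ((x^{1/3}; x^{1/3})_∞ (x^{2/3}; x^{5/3})_∞ (x; x^{5/3})_∞)`. -/
noncomputable def prChi3_200 (x : ℝ) : ℝ :=
  qPochInf x x /
    (qPochInf (x ^ ((1 : ℝ) / 3)) (x ^ ((1 : ℝ) / 3)) *
      qPochInf (x ^ ((2 : ℝ) / 3)) (x ^ ((5 : ℝ) / 3)) *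
      qPochInf x (x ^ ((5 : ℝ) / 3)))

/-- `Pr χ^{sl(3)^}_{[1,1,0]}(x) = (x;x)_∞ / ((x^{1/3}; x^{1/3})_∞ (x^{1/3}; x^{5/3})_∞ (x^{4/3}; x^{5/3})_∞)`. -/
noncomputable def prChi3_110 (x : ℝ) : ℝ :=
  qPochInf x x /
    (qPochInf (x ^ ((1 : ℝ) / 3)) (x ^ ((1 : ℝ) / 3)) *
      qPochInf (x ^ ((1 : ℝ) / 3)) (x ^ ((5 : ℝ) / 3)) *
      qPochInf (x ^ ((4 : ℝ) / 3)) (x ^ ((5 : ℝ) / 3)))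

section aux

open Real

/-- Each factor of the Pochhammer product is positive. -/
lemma qPoch_factor_pos {a r : ℝ} (ha : |a| < 1) (hr0 : 0 ≤ r) (hr1 : r < 1) (k : ℕ) :
    0 < 1 - a * r ^ k := by
  have hrk0 : 0 ≤ r ^ k := pow_nonneg hr0 k
  have hrk1 : r ^ k ≤ 1 := pow_le_one₀ hr0 hr1.le
  have h : |a * r ^ k| < 1 := by
    rw [abs_mul, abs_pow, abs_of_nonneg hr0]
    calc |a| * r ^ k ≤ |a| * 1 := by gcongr
      _ = |a| := mul_one _
      _ < 1 := ha
  have := (abs_lt.mp h).2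
  linarith

lemma qPoch_summable_log {a r : ℝ} (ha : |a| < 1) (hr0 : 0 ≤ r) (hr1 : r < 1) :
    Summable fun k : ℕ => Real.log (1 - a * r ^ k) := by
  have hgeo : Summable (fun k : ℕ => |a| / (1 - |a|) * r ^ k) :=
    (summable_geometric_of_lt_one hr0 hr1).mul_left _
  refine Summable.of_abs (Summable.of_nonneg_of_le (fun k => abs_nonneg _) (fun k => ?_) hgeo)
  have hrk0 : 0 ≤ r ^ k := pow_nonneg hr0 k
  have hrk1 : r ^ k ≤ 1 := pow_le_one₀ hr0 hr1.le
  have hx : |a * r ^ k| < 1 := by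
    rw [abs_mul, abs_pow, abs_of_nonneg hr0]
    calc |a| * r ^ k ≤ |a| * 1 := by gcongr
      _ = |a| := mul_one _
      _ < 1 := ha
  have hbd := Real.abs_log_sub_add_sum_range_le hx 0
  simp only [Finset.range_zero, Finset.sum_empty, zero_add, pow_one] at hbd
  have h1 : |a * r ^ k| = |a| * r ^ k := by rw [abs_mul, abs_pow, abs_of_nonneg hr0]
  have h2 : 1 - |a| ≤ 1 - |a * r ^ k| := by
    rw [h1]
    have : |a| * r ^ k ≤ |a| * 1 := by gcongr
    linarith [mul_one |a|]
  have h3 : 0 < 1 - |a| := by linarith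
  calc |Real.log (1 - a * r ^ k)| ≤ |a * r ^ k| / (1 - |a * r ^ k|) := hbd
    _ ≤ |a * r ^ k| / (1 - |a|) := by gcongr
    _ = |a| / (1 - |a|) * r ^ k := by rw [h1]; ring

lemma qPoch_multipliable {a r : ℝ} (ha : |a| < 1) (hr0 : 0 ≤ r) (hr1 : r < 1) :
    Multipliable fun k : ℕ => 1 - a * r ^ k := by
  exact Real.multipliable_of_summable_log (fun k => qPoch_factor_pos ha hr0 hr1 k)
    (qPoch_summable_log ha hr0 hr1)

lemma qPoch_pos {a r : ℝ} (ha : |a| < 1) (hr0 : 0 ≤ r) (hr1 : r < 1) :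
    0 < qPochInf a r := by
  have := Real.rexp_tsum_eq_tprod (f := fun k => 1 - a * r ^ k)
    (fun k => qPoch_factor_pos ha hr0 hr1 k)
    (qPoch_summable_log ha hr0 hr1)
  beta_reduce at this
  rw [qPochInf, ← this]
  exact Real.exp_pos _

/-- Euler's identity `(−q;q)_∞ (q;q)_∞ = (q²;q²)_∞`. -/
lemma euler_id {q : ℝ} (h0 : 0 < q) (h1 : q < 1) :
    qPochInf (q ^ 2) (q ^ 2) = qPochInf (-q) q * qPochInf q q := by
  have haq : |(-q : ℝ)| < 1 := by rw [abs_neg, abs_of_pos h0]; exact h1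
  have hq : |q| < 1 := by rw [abs_of_pos h0]; exact h1
  have hA := qPoch_multipliable haq h0.le h1
  have hB := qPoch_multipliable hq h0.le h1
  unfold qPochInf
  rw [← hA.tprod_mul hB]
  exact tprod_congr fun k => by ring

lemma rpow_pow_eq {q : ℝ} (h0 : 0 ≤ q) (m n : ℕ) (r : ℝ) (hr : (m : ℝ) * r = n) :
    (q ^ m) ^ r = q ^ n := by
  rw [← Real.rpow_natCast q m, ← Real.rpow_mul h0, hr, Real.rpow_natCast]

lemma div_aux (A B C D E F : ℝ) (hA : A ≠ 0) (hE : E ≠ 0) (hD : D = A * F) :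
    A / (B * C) / D = E / (F * B * C) / E := by
  subst hD
  have key : ∀ X Y : ℝ, X ≠ 0 → X / (X * Y) = 1 / Y := fun X Y hX => by
    rw [← div_div, div_self hX]
  rw [div_div, div_div,
    show B * C * (A * F) = A * (B * C * F) by ring,
    show F * B * C * E = E * (B * C * F) by ring,
    key A _ hA, key E _ hE]

end aux

/-- Relation between principal characters of `sl(2)^` at level 3 and of `sl(3)^` at
level 2: `Pr χ^{sl(2)^}_{[3,0]}(q²)/(q²;q²)_∞ = Pr χ^{sl(3)^}_{[2,0,0]}(q³)/(q³;q³)_∞`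
and `Pr χ^{sl(2)^}_{[2,1]}(q²)/(q²;q²)_∞ = Pr χ^{sl(3)^}_{[1,1,0]}(q³)/(q³;q³)_∞`. -/
theorem principal_character_relation (q : ℝ) (h0 : 0 < q) (h1 : q < 1) :
    prChi2_30 (q ^ 2) / qPochInf (q ^ 2) (q ^ 2) =
      prChi3_200 (q ^ 3) / qPochInf (q ^ 3) (q ^ 3) ∧
    prChi2_21 (q ^ 2) / qPochInf (q ^ 2) (q ^ 2) =
      prChi3_110 (q ^ 3) / qPochInf (q ^ 3) (q ^ 3) := by
  have hq0 : (0 : ℝ) ≤ q := h0.le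
  have e1 : ((q ^ 2 : ℝ)) ^ ((1 : ℝ) / 2) = q ^ 1 := rpow_pow_eq hq0 2 1 _ (by norm_num)
  have e2 : ((q ^ 2 : ℝ)) ^ ((5 : ℝ) / 2) = q ^ 5 := rpow_pow_eq hq0 2 5 _ (by norm_num)
  have e3 : ((q ^ 2 : ℝ)) ^ ((3 : ℝ) / 2) = q ^ 3 := rpow_pow_eq hq0 2 3 _ (by norm_num)
  have e4 : ((q ^ 3 : ℝ)) ^ ((1 : ℝ) / 3) = q ^ 1 := rpow_pow_eq hq0 3 1 _ (by norm_num)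
  have e5 : ((q ^ 3 : ℝ)) ^ ((5 : ℝ) / 3) = q ^ 5 := rpow_pow_eq hq0 3 5 _ (by norm_num)
  have e6 : ((q ^ 3 : ℝ)) ^ ((2 : ℝ) / 3) = q ^ 2 := rpow_pow_eq hq0 3 2 _ (by norm_num)
  have e7 : ((q ^ 3 : ℝ)) ^ ((4 : ℝ) / 3) = q ^ 4 := rpow_pow_eq hq0 3 4 _ (by norm_num)
  have e8 : ((q ^ 2 : ℝ)) ^ (2 : ℕ) = q ^ 4 := by ring
  have haq : |(-q : ℝ)| < 1 := by rw [abs_neg, abs_of_pos h0]; exact h1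
  have hq3 : |(q ^ 3 : ℝ)| < 1 := by
    rw [abs_of_nonneg (pow_nonneg hq0 3)]
    exact pow_lt_one₀ hq0 h1 (by norm_num)
  have hq30 : (0 : ℝ) ≤ q ^ 3 := pow_nonneg hq0 3
  have hq31 : (q : ℝ) ^ 3 < 1 := pow_lt_one₀ hq0 h1 (by norm_num)
  have hA : qPochInf (-q) q ≠ 0 := (qPoch_pos haq hq0 h1).ne'
  have hE : qPochInf (q ^ 3) (q ^ 3) ≠ 0 := (qPoch_pos hq3 hq30 hq31).ne'
  have hD := euler_id h0 h1
  constructor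
  · rw [prChi2_30, prChi3_200, e1, e2, e3, e4, e5, e6, pow_one]
    exact div_aux _ _ _ _ _ _ hA hE hD
  · rw [prChi2_21, prChi3_110, e1, e2, e4, e5, e7, e8, pow_one]
    exact div_aux _ _ _ _ _ _ hA hE hD
end
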